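/- Let G be a simple graph on n ≥ 5 vertices with positive degrees and α real. Then for any four distinct vertices with degrees d_j, d_k, d_ℓ, d_m: Z_{2α}(G) ≥ d_ℓ^{2α} + d_m^{2α} + (Z_α(G) − d_ℓ^α − d_m^α)²/(n−2) + (1/2)(d_j^α − d_k^α)² + (2(n−2)/(n−4))·((Z_α(G) − d_ℓ^α − d_m^α)/(n−2) − (d_j^α + d_k^α)/2)². -/

import Mathlib

/-!
Put `x v = d_v ^ α`, so that `d_v ^ (2α) = x v ^ 2`, and drop the vertices `l` and `w`. On the
remaining `n - 2` vertices the excess `∑ x² - (∑ x)² / (n - 2)` is the squared distance of `x`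
from the constant vectors. Splitting that distance orthogonally along `e_j - e_k`, along the
difference of the mean on `{j, k}` and the mean on the other `n - 4` vertices, and within those
`n - 4` vertices yields the two displayed squares plus a variance term, which is nonnegative by
Cauchy–Schwarz.
-/

open Finset

theorem sq_add_add_div_le_add_sq_add_sq {m P Q a b : ℝ} (hm : 0 < m) (hPQ : P ^ 2 ≤ m * Q) :
    (P + a + b) ^ 2 / (m + 2) + 1 / 2 * (a - b) ^ 2
        + 2 * (m + 2) / m * ((P + a + b) / (m + 2) - (a + b) / 2) ^ 2
      ≤ Q + a ^ 2 + b ^ 2 := by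
  have hvariance : P ^ 2 / m ≤ Q := by rwa [div_le_iff₀ hm, mul_comm]
  have hdecomp : Q + a ^ 2 + b ^ 2 - ((P + a + b) ^ 2 / (m + 2) + 1 / 2 * (a - b) ^ 2
        + 2 * (m + 2) / m * ((P + a + b) / (m + 2) - (a + b) / 2) ^ 2) = Q - P ^ 2 / m := by
    field_simp
    ring
  linarith

theorem Finset.sq_sum_div_card_add_le_sum_sq {ι : Type*} [DecidableEq ι] {u : Finset ι}
    (f : ι → ℝ) {j k : ι} (hj : j ∈ u) (hk : k ∈ u) (hjk : j ≠ k) (hu : 3 ≤ #u) :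
    (∑ i ∈ u, f i) ^ 2 / #u + 1 / 2 * (f j - f k) ^ 2
        + 2 * #u / (#u - 2) * ((∑ i ∈ u, f i) / #u - (f j + f k) / 2) ^ 2
      ≤ ∑ i ∈ u, f i ^ 2 := by
  have hk' : k ∈ u.erase j := mem_erase.2 ⟨hjk.symm, hk⟩
  have hsum (g : ι → ℝ) : ∑ i ∈ u, g i = ∑ i ∈ (u.erase j).erase k, g i + g j + g k := by
    rw [← add_sum_erase u g hj, ← add_sum_erase _ g hk']
    ring
  have hcard : #((u.erase j).erase k) + 2 = #u := by
    rw [← card_erase_add_one hj, ← card_erase_add_one hk']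
  have hs : (0 : ℝ) < #((u.erase j).erase k) := by
    exact_mod_cast (show 0 < #((u.erase j).erase k) by omega)
  rw [hsum, hsum, ← hcard, Nat.cast_add, Nat.cast_two, add_sub_cancel_right]
  exact sq_add_add_div_le_add_sq_add_sq hs (sq_sum_le_card_mul_sum_sq ..)

theorem Fintype.sum_sq_ge_of_four_distinct {V : Type*} [Fintype V] [DecidableEq V]
    (hn : 5 ≤ Fintype.card V) (x : V → ℝ) {j k l w : V} (hjk : j ≠ k) (hjl : j ≠ l)
    (hjw : j ≠ w) (hkl : k ≠ l) (hkw : k ≠ w) (hlw : l ≠ w) :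
    x l ^ 2 + x w ^ 2 + (∑ v, x v - x l - x w) ^ 2 / (Fintype.card V - 2)
        + 1 / 2 * (x j - x k) ^ 2
        + 2 * (Fintype.card V - 2) / (Fintype.card V - 4) *
          ((∑ v, x v - x l - x w) / (Fintype.card V - 2) - (x j + x k) / 2) ^ 2
      ≤ ∑ v, x v ^ 2 := by
  have hw : w ∈ univ.erase l := mem_erase.2 ⟨hlw.symm, mem_univ w⟩
  have hsum (g : V → ℝ) : ∑ v, g v = g l + g w + ∑ v ∈ (univ.erase l).erase w, g v := by
    rw [← add_sum_erase univ g (mem_univ l), ← add_sum_erase _ g hw]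
    ring
  have hcard : #((univ.erase l).erase w) + 2 = Fintype.card V := by
    rw [← card_univ, ← card_erase_add_one (mem_univ l), ← card_erase_add_one hw]
  have hu : 3 ≤ #((univ.erase l).erase w) := by omega
  have key := sq_sum_div_card_add_le_sum_sq x (mem_erase.2 ⟨hjw, mem_erase.2 ⟨hjl, mem_univ j⟩⟩)
    (mem_erase.2 ⟨hkw, mem_erase.2 ⟨hkl, mem_univ k⟩⟩) hjk hu
  have hcardR : (#((univ.erase l).erase w) : ℝ) = Fintype.card V - 2 := by
    rw [← hcard]
    push_cast
    ring
  rw [hcardR, sub_sub, show (2 : ℝ) + 2 = 4 by norm_num] at key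
  have hrest : ∑ v, x v - x l - x w = ∑ v ∈ (univ.erase l).erase w, x v := by
    rw [hsum]
    ring
  rw [hrest, hsum (x · ^ 2)]
  linarith

theorem stmt11_general {V : Type*} [Fintype V] [DecidableEq V] (G : SimpleGraph V)
    [DecidableRel G.Adj] (hn : 5 ≤ Fintype.card V)
    (α : ℝ) (j k l w : V)
    (hjk : j ≠ k) (hjl : j ≠ l) (hjw : j ≠ w) (hkl : k ≠ l) (hkw : k ≠ w)
    (hlw : l ≠ w) :
    ∑ v : V, (G.degree v : ℝ) ^ (2 * α) ≥
      (G.degree l : ℝ) ^ (2 * α) + (G.degree w : ℝ) ^ (2 * α)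
      + ((∑ v : V, (G.degree v : ℝ) ^ α) - (G.degree l : ℝ) ^ α
            - (G.degree w : ℝ) ^ α) ^ 2 / ((Fintype.card V : ℝ) - 2)
      + (1 / 2) * ((G.degree j : ℝ) ^ α - (G.degree k : ℝ) ^ α) ^ 2
      + (2 * ((Fintype.card V : ℝ) - 2) / ((Fintype.card V : ℝ) - 4)) *
          (((∑ v : V, (G.degree v : ℝ) ^ α) - (G.degree l : ℝ) ^ α
                - (G.degree w : ℝ) ^ α) / ((Fintype.card V : ℝ) - 2)
            - ((G.degree j : ℝ) ^ α + (G.degree k : ℝ) ^ α) / 2) ^ 2 := by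
  have hsq (v : V) : (G.degree v : ℝ) ^ (2 * α) = ((G.degree v : ℝ) ^ α) ^ 2 := by
    rw [mul_comm, Real.rpow_mul (Nat.cast_nonneg _), Real.rpow_two]
  simpa only [hsq] using Fintype.sum_sq_ge_of_four_distinct hn (fun v => (G.degree v : ℝ) ^ α)
    hjk hjl hjw hkl hkw hlw

theorem stmt11 {V : Type*} [Fintype V] [DecidableEq V] (G : SimpleGraph V)
    [DecidableRel G.Adj] (hn : 5 ≤ Fintype.card V)
    (hdeg : ∀ v : V, 0 < G.degree v) (α : ℝ) (j k l w : V)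
    (hjk : j ≠ k) (hjl : j ≠ l) (hjw : j ≠ w) (hkl : k ≠ l) (hkw : k ≠ w)
    (hlw : l ≠ w) :
    ∑ v : V, (G.degree v : ℝ) ^ (2 * α) ≥
      (G.degree l : ℝ) ^ (2 * α) + (G.degree w : ℝ) ^ (2 * α)
      + ((∑ v : V, (G.degree v : ℝ) ^ α) - (G.degree l : ℝ) ^ α
            - (G.degree w : ℝ) ^ α) ^ 2 / ((Fintype.card V : ℝ) - 2)
      + (1 / 2) * ((G.degree j : ℝ) ^ α - (G.degree k : ℝ) ^ α) ^ 2
      + (2 * ((Fintype.card V : ℝ) - 2) / ((Fintype.card V : ℝ) - 4)) *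
          (((∑ v : V, (G.degree v : ℝ) ^ α) - (G.degree l : ℝ) ^ α
                - (G.degree w : ℝ) ^ α) / ((Fintype.card V : ℝ) - 2)
            - ((G.degree j : ℝ) ^ α + (G.degree k : ℝ) ^ α) / 2) ^ 2 :=
  stmt11_general G hn α j k l w hjk hjl hjw hkl hkw hlw
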